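/- Let α ∈ ℝ and λ ∈ ℝ, and set δ = λ/√(1 + λ²) and b = √(2/π). Then ∫_ℝ ((1 − α z)² + 1)² φ(z) Φ(λ z) dz = (2 + 4α² + 1.5α⁴) − b(2α³(1 − δ²)δ + 4αδ + 4α³δ). Consequently the generalized Balakrishnan alpha skew normal density f(z; α, λ) = ((1 − αz)² + 1)² φ(z) Φ(λz) / C(α, λ), with C(α, λ) equal to this expression, is a probability density on ℝ. -/

import Mathlib

open MeasureTheory Real Filter Set Topology

/-- The standard normal probability density function. -/
noncomputable def phi (z : ℝ) : ℝ := (Real.sqrt (2 * Real.pi))⁻¹ * Real.exp (-z ^ 2 / 2)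

/-- The standard normal cumulative distribution function. -/
noncomputable def Phi (z : ℝ) : ℝ := ∫ t in Set.Iic z, phi t

lemma continuous_phi : Continuous phi := by
  unfold phi; fun_prop

lemma phi_nonneg (z : ℝ) : 0 ≤ phi z :=
  mul_nonneg (inv_nonneg.2 (Real.sqrt_nonneg _)) (Real.exp_pos _).le

lemma phi_neg (z : ℝ) : phi (-z) = phi z := by unfold phi; rw [neg_pow]; norm_num

lemma sqrt_two_pi_pos : 0 < Real.sqrt (2 * Real.pi) :=
  Real.sqrt_pos.2 (by positivity)

lemma integrable_pow_gauss (n : ℕ) {s : ℝ} (hs : 0 < s) :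
    Integrable (fun z : ℝ => z ^ n * Real.exp (-s * z ^ 2 / 2)) := by
  have h := integrable_rpow_mul_exp_neg_mul_sq (b := s / 2) (by linarith) (s := (n : ℝ))
    (lt_of_lt_of_le (by norm_num) (Nat.cast_nonneg n))
  have e : (fun z : ℝ => z ^ n * Real.exp (-s * z ^ 2 / 2))
      = fun z : ℝ => z ^ (n : ℝ) * Real.exp (-(s / 2) * z ^ 2) := by
    funext z; rw [Real.rpow_natCast]; congr 1; ring_nf
  rw [e]; exact h

lemma tendsto_pow_gauss_atTop (n : ℕ) {s : ℝ} (hs : 0 < s) :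
    Tendsto (fun z : ℝ => z ^ n * Real.exp (-s * z ^ 2 / 2)) atTop (𝓝 0) := by
  have h := (rpow_mul_exp_neg_mul_sq_isLittleO_exp_neg (b := s / 2) (by linarith) (n : ℝ)).isBigO.trans_tendsto
    (by
      have : Tendsto (fun x : ℝ => Real.exp (-(1/2) * x)) atTop (𝓝 0) := by
        apply Real.tendsto_exp_atBot.comp
        apply Tendsto.const_mul_atTop_of_neg (by norm_num)
        exact tendsto_id
      exact this)
  have e : (fun z : ℝ => z ^ n * Real.exp (-s * z ^ 2 / 2))
      = fun z : ℝ => z ^ (n : ℝ) * Real.exp (-(s / 2) * z ^ 2) := by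
    funext z; rw [Real.rpow_natCast]; congr 1; ring_nf
  rw [e]; exact h

lemma tendsto_poly4_gauss_atTop (s e4 e3 e2 e1 e0 : ℝ) (hs : 0 < s) :
    Tendsto (fun z : ℝ => (e4*z^4 + e3*z^3 + e2*z^2 + e1*z + e0) * Real.exp (-s * z ^ 2 / 2))
      atTop (𝓝 0) := by
  have h : ∀ (k : ℕ) (c : ℝ), Tendsto (fun z : ℝ => c * (z ^ k * Real.exp (-s * z ^ 2 / 2)))
      atTop (𝓝 (c * 0)) := fun k c => (tendsto_pow_gauss_atTop k hs).const_mul c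
  have h2 := ((((h 4 e4).add (h 3 e3)).add (h 2 e2)).add (h 1 e1)).add (h 0 e0)
  have e : (fun z : ℝ => (e4*z^4 + e3*z^3 + e2*z^2 + e1*z + e0) * Real.exp (-s * z ^ 2 / 2))
      = fun z : ℝ => e4 * (z ^ 4 * Real.exp (-s * z ^ 2 / 2)) + e3 * (z ^ 3 * Real.exp (-s * z ^ 2 / 2))
        + e2 * (z ^ 2 * Real.exp (-s * z ^ 2 / 2)) + e1 * (z ^ 1 * Real.exp (-s * z ^ 2 / 2))
        + e0 * (z ^ 0 * Real.exp (-s * z ^ 2 / 2)) := by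
    funext z; ring
  rw [e]; simpa using h2

lemma tendsto_poly4_gauss_atBot (s e4 e3 e2 e1 e0 : ℝ) (hs : 0 < s) :
    Tendsto (fun z : ℝ => (e4*z^4 + e3*z^3 + e2*z^2 + e1*z + e0) * Real.exp (-s * z ^ 2 / 2))
      atBot (𝓝 0) := by
  have h := (tendsto_poly4_gauss_atTop s e4 (-e3) e2 (-e1) e0 hs).comp tendsto_neg_atBot_atTop
  apply h.congr
  intro z
  simp only [Function.comp_apply]
  rw [show (-z) ^ 2 = z ^ 2 by ring]
  ring

lemma integrable_poly4_gauss (s e4 e3 e2 e1 e0 : ℝ) (hs : 0 < s) :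
    Integrable (fun z : ℝ => (e4*z^4 + e3*z^3 + e2*z^2 + e1*z + e0) * Real.exp (-s * z ^ 2 / 2)) := by
  have h : ∀ (k : ℕ) (c : ℝ), Integrable (fun z : ℝ => c * (z ^ k * Real.exp (-s * z ^ 2 / 2))) :=
    fun k c => (integrable_pow_gauss k hs).const_mul c
  have h2 := ((((h 4 e4).add (h 3 e3)).add (h 2 e2)).add (h 1 e1)).add (h 0 e0)
  have e : (fun z : ℝ => (e4*z^4 + e3*z^3 + e2*z^2 + e1*z + e0) * Real.exp (-s * z ^ 2 / 2))
      = fun z : ℝ => e4 * (z ^ 4 * Real.exp (-s * z ^ 2 / 2)) + e3 * (z ^ 3 * Real.exp (-s * z ^ 2 / 2))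
        + e2 * (z ^ 2 * Real.exp (-s * z ^ 2 / 2)) + e1 * (z ^ 1 * Real.exp (-s * z ^ 2 / 2))
        + e0 * (z ^ 0 * Real.exp (-s * z ^ 2 / 2)) := by
    funext z; ring
  rw [e]; exact h2

lemma poly_hasDerivAt (a b c d z : ℝ) :
    HasDerivAt (fun x : ℝ => a*x^3 + b*x^2 + c*x + d) (3*a*z^2 + (2*b*z + (c + 0))) z := by
  have h3 : HasDerivAt (fun x : ℝ => a*x^3) (3*a*z^2) z := by
    have := (hasDerivAt_pow 3 z).const_mul a
    refine this.congr_deriv ?_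
    push_cast; ring
  have h2 : HasDerivAt (fun x : ℝ => b*x^2) (2*b*z) z := by
    have := (hasDerivAt_pow 2 z).const_mul b
    refine this.congr_deriv ?_
    push_cast; ring
  have h1 : HasDerivAt (fun x : ℝ => c*x) c z := by
    simpa using (hasDerivAt_id z).const_mul c
  have h := ((h3.add h2).add h1).add (hasDerivAt_const z d)
  refine h.congr_deriv ?_
  ring

lemma gauss_hasDerivAt (s z : ℝ) :
    HasDerivAt (fun x : ℝ => Real.exp (-s * x ^ 2 / 2)) (Real.exp (-s * z ^ 2 / 2) * (-s * (2*z) / 2)) z := by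
  have inner : HasDerivAt (fun x : ℝ => -s * x ^ 2 / 2) (-s * (2*z) / 2) z := by
    have := ((hasDerivAt_pow 2 z).const_mul (-s)).div_const 2
    refine this.congr_deriv ?_
    push_cast; ring
  exact inner.exp

lemma masterA (s a b c d : ℝ) (hs : 0 < s) :
    (∫ z : ℝ, ((-(s*a))*z^4 + (-(s*b))*z^3 + (3*a - s*c)*z^2 + (2*b - s*d)*z + c)
      * Real.exp (-s * z ^ 2 / 2)) = 0 := by
  have hder : ∀ z : ℝ, HasDerivAt (fun x : ℝ => (a*x^3 + b*x^2 + c*x + d) * Real.exp (-s * x ^ 2 / 2))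
      (((-(s*a))*z^4 + (-(s*b))*z^3 + (3*a - s*c)*z^2 + (2*b - s*d)*z + c)
        * Real.exp (-s * z ^ 2 / 2)) z := by
    intro z
    have h := (poly_hasDerivAt a b c d z).mul (gauss_hasDerivAt s z)
    refine h.congr_deriv ?_
    ring
  have hint := integrable_poly4_gauss s (-(s*a)) (-(s*b)) (3*a - s*c) (2*b - s*d) c hs
  have hbot := tendsto_poly4_gauss_atBot s 0 a b c d hs
  have htop := tendsto_poly4_gauss_atTop s 0 a b c d hs
  have hbot' : Tendsto (fun x : ℝ => (a*x^3 + b*x^2 + c*x + d) * Real.exp (-s * x ^ 2 / 2)) atBot (𝓝 0) := by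
    apply hbot.congr; intro z; ring_nf
  have htop' : Tendsto (fun x : ℝ => (a*x^3 + b*x^2 + c*x + d) * Real.exp (-s * x ^ 2 / 2)) atTop (𝓝 0) := by
    apply htop.congr; intro z; ring_nf
  have := integral_of_hasDerivAt_of_tendsto hder hint hbot' htop'
  simpa using this

lemma G0 {s : ℝ} (hs : 0 < s) :
    (∫ z : ℝ, Real.exp (-s * z ^ 2 / 2)) = Real.sqrt (2*Real.pi) / Real.sqrt s := by
  have h := integral_gaussian (s/2)
  have e : (fun z : ℝ => Real.exp (-s * z ^ 2 / 2)) = fun z : ℝ => Real.exp (-(s/2) * z ^ 2) := by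
    funext z; congr 1; ring
  rw [e, h, show Real.pi / (s/2) = 2*Real.pi/s by ring, Real.sqrt_div (by positivity) s]

lemma G1 {s : ℝ} (hs : 0 < s) : (∫ z : ℝ, z * Real.exp (-s * z ^ 2 / 2)) = 0 := by
  have h := masterA s 0 0 0 1 hs
  have e : (fun z : ℝ => ((-(s*0))*z^4 + (-(s*0))*z^3 + (3*0 - s*0)*z^2 + (2*0 - s*1)*z + 0)
      * Real.exp (-s * z ^ 2 / 2)) = fun z : ℝ => (-s) * (z * Real.exp (-s * z ^ 2 / 2)) := by
    funext z; ring
  rw [e, integral_const_mul] at h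
  exact (mul_eq_zero.mp h).resolve_left (neg_ne_zero.mpr hs.ne')

lemma G3 {s : ℝ} (hs : 0 < s) : (∫ z : ℝ, z^3 * Real.exp (-s * z ^ 2 / 2)) = 0 := by
  have h := masterA s 0 1 0 0 hs
  have e : (fun z : ℝ => ((-(s*0))*z^4 + (-(s*1))*z^3 + (3*0 - s*0)*z^2 + (2*1 - s*0)*z + 0)
      * Real.exp (-s * z ^ 2 / 2)) = fun z : ℝ =>
        (-s) * (z^3 * Real.exp (-s * z ^ 2 / 2)) + 2 * (z^1 * Real.exp (-s * z ^ 2 / 2)) := by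
    funext z; ring
  rw [e, integral_add (((integrable_pow_gauss 3 hs).const_mul _))
    ((integrable_pow_gauss 1 hs).const_mul 2), integral_const_mul, integral_const_mul,
    show (fun z : ℝ => z^1 * Real.exp (-s * z ^ 2 / 2)) = fun z : ℝ => z * Real.exp (-s * z ^ 2 / 2) from
      funext fun z => by ring, G1 hs] at h
  simp only [mul_zero, add_zero] at h
  exact (mul_eq_zero.mp h).resolve_left (neg_ne_zero.mpr hs.ne')

lemma G2 {s : ℝ} (hs : 0 < s) :
    (∫ z : ℝ, z^2 * Real.exp (-s * z ^ 2 / 2)) = Real.sqrt (2*Real.pi) / (s * Real.sqrt s) := by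
  have h := masterA s 0 0 1 0 hs
  have e : (fun z : ℝ => ((-(s*0))*z^4 + (-(s*0))*z^3 + (3*0 - s*1)*z^2 + (2*0 - s*0)*z + 1)
      * Real.exp (-s * z ^ 2 / 2)) = fun z : ℝ =>
        (-s) * (z^2 * Real.exp (-s * z ^ 2 / 2)) + (z^0 * Real.exp (-s * z ^ 2 / 2)) := by
    funext z; ring
  rw [e, integral_add ((integrable_pow_gauss 2 hs).const_mul _) (integrable_pow_gauss 0 hs),
    integral_const_mul] at h
  have h0 : (∫ z : ℝ, z^0 * Real.exp (-s * z ^ 2 / 2)) = Real.sqrt (2*Real.pi) / Real.sqrt s := by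
    rw [show (fun z : ℝ => z^0 * Real.exp (-s * z ^ 2 / 2)) = fun z : ℝ => Real.exp (-s * z ^ 2 / 2) by
      funext z; ring]
    exact G0 hs
  rw [h0] at h
  have hss : Real.sqrt s > 0 := Real.sqrt_pos.2 hs
  field_simp at h ⊢
  linarith

lemma phi_eq : phi = fun z : ℝ => (Real.sqrt (2*Real.pi))⁻¹ * Real.exp (-1 * z ^ 2 / 2) := by
  funext z; unfold phi; norm_num

lemma integrable_poly4_phi (e4 e3 e2 e1 e0 : ℝ) :
    Integrable (fun z : ℝ => (e4*z^4 + e3*z^3 + e2*z^2 + e1*z + e0) * phi z) := by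
  have h := (integrable_poly4_gauss 1 e4 e3 e2 e1 e0 one_pos).const_mul (Real.sqrt (2*Real.pi))⁻¹
  have e : (fun z : ℝ => (e4*z^4 + e3*z^3 + e2*z^2 + e1*z + e0) * phi z)
      = fun z : ℝ => (Real.sqrt (2*Real.pi))⁻¹
        * ((e4*z^4 + e3*z^3 + e2*z^2 + e1*z + e0) * Real.exp (-1 * z ^ 2 / 2)) := by
    funext z; rw [phi_eq]; ring
  rw [e]; exact h

lemma integrable_phi : Integrable phi := by
  have h := integrable_poly4_phi 0 0 0 0 1
  have e : phi = fun z : ℝ => (0*z^4 + 0*z^3 + 0*z^2 + 0*z + 1) * phi z := by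
    funext z; ring
  rw [e]; exact h

lemma integral_phi : (∫ z : ℝ, phi z) = 1 := by
  rw [phi_eq, integral_const_mul, G0 one_pos]
  rw [Real.sqrt_one]
  field_simp

lemma Phi_nonneg (x : ℝ) : 0 ≤ Phi x :=
  setIntegral_nonneg measurableSet_Iic fun t _ => phi_nonneg t

lemma Phi_le_one (x : ℝ) : Phi x ≤ 1 := by
  rw [← integral_phi]
  exact setIntegral_le_integral integrable_phi (ae_of_all _ phi_nonneg)

lemma Phi_neg (x : ℝ) : Phi (-x) = 1 - Phi x := by
  have h1 : Phi (-x) = ∫ t in Ioi x, phi t := by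
    have h := integral_comp_neg_Iic (-x) phi
    rw [neg_neg] at h
    rw [← h]
    unfold Phi
    exact setIntegral_congr_fun measurableSet_Iic fun t _ => (phi_neg t).symm
  have h2 : Phi x + ∫ t in Ioi x, phi t = 1 := by
    have h := setIntegral_union (f := phi) (μ := volume) (Iic_disjoint_Ioi (le_refl x))
      measurableSet_Ioi integrable_phi.integrableOn integrable_phi.integrableOn
    rw [Iic_union_Ioi, setIntegral_univ, integral_phi] at h
    exact h.symm
  linarith

lemma hasDerivAt_Phi (x : ℝ) : HasDerivAt Phi (phi x) x := by
  have e : Phi = fun u => Phi 0 + ∫ t in (0:ℝ)..u, phi t := by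
    funext u
    rw [← intervalIntegral.integral_Iic_sub_Iic integrable_phi.integrableOn
      integrable_phi.integrableOn]
    unfold Phi; ring
  rw [e]
  exact (intervalIntegral.integral_hasDerivAt_right (integrable_phi.intervalIntegrable)
    (continuous_phi.stronglyMeasurableAtFilter _ _) continuous_phi.continuousAt).const_add _

lemma continuous_Phi : Continuous Phi :=
  continuous_iff_continuousAt.2 fun x => (hasDerivAt_Phi x).continuousAt

lemma phi_mul_phi (lam z : ℝ) :
    phi z * phi (lam * z) = (2*Real.pi)⁻¹ * Real.exp (-(1 + lam^2) * z ^ 2 / 2) := by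
  unfold phi
  rw [mul_mul_mul_comm, ← Real.exp_add, ← mul_inv,
    Real.mul_self_sqrt (by positivity : (0:ℝ) ≤ 2 * Real.pi)]
  congr 1
  ring

lemma integrable_poly4_phi_Phi (lam e4 e3 e2 e1 e0 : ℝ) :
    Integrable (fun z : ℝ => (e4*z^4 + e3*z^3 + e2*z^2 + e1*z + e0) * phi z * Phi (lam * z)) := by
  have hc : Continuous fun z : ℝ => Phi (lam * z) := continuous_Phi.comp (by fun_prop)
  have h := (integrable_poly4_phi e4 e3 e2 e1 e0).bdd_mul
    hc.aestronglyMeasurable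
    (ae_of_all _ fun z => by
      rw [Real.norm_eq_abs, abs_of_nonneg (Phi_nonneg _)]
      exact Phi_le_one _)
  have e : (fun z : ℝ => (e4*z^4 + e3*z^3 + e2*z^2 + e1*z + e0) * phi z * Phi (lam * z))
      = fun z : ℝ => Phi (lam * z) * ((e4*z^4 + e3*z^3 + e2*z^2 + e1*z + e0) * phi z) := by
    funext z; ring
  rw [e]; exact h

lemma integrable_poly4_phiphi (lam e4 e3 e2 e1 e0 : ℝ) :
    Integrable (fun z : ℝ => (e4*z^4 + e3*z^3 + e2*z^2 + e1*z + e0) * (phi z * phi (lam * z))) := by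
  have hs : (0:ℝ) < 1 + lam^2 := by positivity
  have h := (integrable_poly4_gauss (1+lam^2) e4 e3 e2 e1 e0 hs).const_mul (2*Real.pi)⁻¹
  have e : (fun z : ℝ => (e4*z^4 + e3*z^3 + e2*z^2 + e1*z + e0) * (phi z * phi (lam * z)))
      = fun z : ℝ => (2*Real.pi)⁻¹
        * ((e4*z^4 + e3*z^3 + e2*z^2 + e1*z + e0) * Real.exp (-(1+lam^2) * z ^ 2 / 2)) := by
    funext z; rw [phi_mul_phi]; ring
  rw [e]; exact h

lemma tendsto_poly4_phi_atTop (e4 e3 e2 e1 e0 : ℝ) :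
    Tendsto (fun z : ℝ => (e4*z^4 + e3*z^3 + e2*z^2 + e1*z + e0) * phi z) atTop (𝓝 0) := by
  have h := (tendsto_poly4_gauss_atTop 1 e4 e3 e2 e1 e0 one_pos).const_mul (Real.sqrt (2*Real.pi))⁻¹
  rw [mul_zero] at h
  apply h.congr
  intro z; rw [phi_eq]; ring

lemma tendsto_poly4_phi_atBot (e4 e3 e2 e1 e0 : ℝ) :
    Tendsto (fun z : ℝ => (e4*z^4 + e3*z^3 + e2*z^2 + e1*z + e0) * phi z) atBot (𝓝 0) := by
  have h := (tendsto_poly4_gauss_atBot 1 e4 e3 e2 e1 e0 one_pos).const_mul (Real.sqrt (2*Real.pi))⁻¹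
  rw [mul_zero] at h
  apply h.congr
  intro z; rw [phi_eq]; ring

lemma tendsto_poly4_phi_Phi (lam e4 e3 e2 e1 e0 : ℝ) (l : Filter ℝ)
    (h : Tendsto (fun z : ℝ => (e4*z^4 + e3*z^3 + e2*z^2 + e1*z + e0) * phi z) l (𝓝 0)) :
    Tendsto (fun z : ℝ => (e4*z^4 + e3*z^3 + e2*z^2 + e1*z + e0) * phi z * Phi (lam * z)) l (𝓝 0) := by
  have habs : Tendsto (fun z : ℝ => |(e4*z^4 + e3*z^3 + e2*z^2 + e1*z + e0) * phi z|) l (𝓝 0) := by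
    have := h.abs; rwa [abs_zero] at this
  apply squeeze_zero_norm ?_ habs
  intro z
  rw [Real.norm_eq_abs, abs_mul]
  calc |(e4*z^4 + e3*z^3 + e2*z^2 + e1*z + e0) * phi z| * |Phi (lam * z)|
      ≤ |(e4*z^4 + e3*z^3 + e2*z^2 + e1*z + e0) * phi z| * 1 := by
        apply mul_le_mul_of_nonneg_left _ (abs_nonneg _)
        rw [abs_of_nonneg (Phi_nonneg _)]
        exact Phi_le_one _
    _ = |(e4*z^4 + e3*z^3 + e2*z^2 + e1*z + e0) * phi z| := mul_one _

lemma hasDerivAt_phi (z : ℝ) : HasDerivAt phi (-z * phi z) z := by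
  rw [phi_eq]
  have h := (gauss_hasDerivAt 1 z).const_mul (Real.sqrt (2*Real.pi))⁻¹
  refine h.congr_deriv ?_
  beta_reduce
  ring

lemma masterB (lam a b c d : ℝ) :
    (∫ z : ℝ, (((-a)*z^4 + (-b)*z^3 + (3*a - c)*z^2 + (2*b - d)*z + c) * phi z * Phi (lam * z)
      + lam * ((a*z^3 + b*z^2 + c*z + d) * (phi z * phi (lam * z))))) = 0 := by
  have hder : ∀ z : ℝ, HasDerivAt
      (fun x : ℝ => (a*x^3 + b*x^2 + c*x + d) * phi x * Phi (lam * x))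
      (((-a)*z^4 + (-b)*z^3 + (3*a - c)*z^2 + (2*b - d)*z + c) * phi z * Phi (lam * z)
        + lam * ((a*z^3 + b*z^2 + c*z + d) * (phi z * phi (lam * z)))) z := by
    intro z
    have hPl : HasDerivAt (fun x : ℝ => Phi (lam * x)) (lam * phi (lam * z)) z := by
      have h := (hasDerivAt_Phi (lam * z)).comp z ((hasDerivAt_id z).const_mul lam)
      refine h.congr_deriv ?_
      ring
    have h := ((poly_hasDerivAt a b c d z).mul (hasDerivAt_phi z)).mul hPl
    refine h.congr_deriv ?_
    simp only [Pi.mul_apply]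
    ring
  have hint : Integrable (fun z : ℝ =>
      ((-a)*z^4 + (-b)*z^3 + (3*a - c)*z^2 + (2*b - d)*z + c) * phi z * Phi (lam * z)
      + lam * ((a*z^3 + b*z^2 + c*z + d) * (phi z * phi (lam * z)))) := by
    apply (integrable_poly4_phi_Phi lam (-a) (-b) (3*a-c) (2*b-d) c).add
    have h := (integrable_poly4_phiphi lam 0 a b c d).const_mul lam
    have e : (fun z : ℝ => lam * ((a*z^3 + b*z^2 + c*z + d) * (phi z * phi (lam * z))))
        = fun z : ℝ => lam * ((0*z^4 + a*z^3 + b*z^2 + c*z + d) * (phi z * phi (lam * z))) := by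
      funext z; ring
    rw [e]; exact h
  have hbot := tendsto_poly4_phi_Phi lam 0 a b c d atBot (tendsto_poly4_phi_atBot 0 a b c d)
  have htop := tendsto_poly4_phi_Phi lam 0 a b c d atTop (tendsto_poly4_phi_atTop 0 a b c d)
  have hbot' : Tendsto (fun x : ℝ => (a*x^3 + b*x^2 + c*x + d) * phi x * Phi (lam * x)) atBot (𝓝 0) := by
    apply hbot.congr; intro z; ring_nf
  have htop' : Tendsto (fun x : ℝ => (a*x^3 + b*x^2 + c*x + d) * phi x * Phi (lam * x)) atTop (𝓝 0) := by
    apply htop.congr; intro z; ring_nf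
  have := integral_of_hasDerivAt_of_tendsto hder hint hbot' htop'
  simpa using this

section Moments
variable (lam : ℝ)

lemma int0 : Integrable (fun z : ℝ => phi z * Phi (lam * z)) := by
  have h := integrable_poly4_phi_Phi lam 0 0 0 0 1
  have e : (fun z : ℝ => phi z * Phi (lam * z))
      = fun z : ℝ => (0*z^4 + 0*z^3 + 0*z^2 + 0*z + 1) * phi z * Phi (lam * z) := by
    funext z; ring
  rw [e]; exact h

lemma int1 : Integrable (fun z : ℝ => z * phi z * Phi (lam * z)) := by
  have h := integrable_poly4_phi_Phi lam 0 0 0 1 0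
  have e : (fun z : ℝ => z * phi z * Phi (lam * z))
      = fun z : ℝ => (0*z^4 + 0*z^3 + 0*z^2 + 1*z + 0) * phi z * Phi (lam * z) := by
    funext z; ring
  rw [e]; exact h

lemma int2 : Integrable (fun z : ℝ => z^2 * phi z * Phi (lam * z)) := by
  have h := integrable_poly4_phi_Phi lam 0 0 1 0 0
  have e : (fun z : ℝ => z^2 * phi z * Phi (lam * z))
      = fun z : ℝ => (0*z^4 + 0*z^3 + 1*z^2 + 0*z + 0) * phi z * Phi (lam * z) := by
    funext z; ring
  rw [e]; exact h

lemma int3 : Integrable (fun z : ℝ => z^3 * phi z * Phi (lam * z)) := by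
  have h := integrable_poly4_phi_Phi lam 0 1 0 0 0
  have e : (fun z : ℝ => z^3 * phi z * Phi (lam * z))
      = fun z : ℝ => (0*z^4 + 1*z^3 + 0*z^2 + 0*z + 0) * phi z * Phi (lam * z) := by
    funext z; ring
  rw [e]; exact h

lemma int4 : Integrable (fun z : ℝ => z^4 * phi z * Phi (lam * z)) := by
  have h := integrable_poly4_phi_Phi lam 1 0 0 0 0
  have e : (fun z : ℝ => z^4 * phi z * Phi (lam * z))
      = fun z : ℝ => (1*z^4 + 0*z^3 + 0*z^2 + 0*z + 0) * phi z * Phi (lam * z) := by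
    funext z; ring
  rw [e]; exact h

lemma intJ (k : ℕ) : Integrable (fun z : ℝ => z^k * (phi z * phi (lam * z))) := by
  have hs : (0:ℝ) < 1 + lam^2 := by positivity
  have h := (integrable_pow_gauss k hs).const_mul (2*Real.pi)⁻¹
  have e : (fun z : ℝ => z^k * (phi z * phi (lam * z)))
      = fun z : ℝ => (2*Real.pi)⁻¹ * (z^k * Real.exp (-(1+lam^2) * z ^ 2 / 2)) := by
    funext z; rw [phi_mul_phi]; ring
  rw [e]; exact h

lemma spos : (0:ℝ) < 1 + lam^2 := by positivity

lemma J0 : (∫ z : ℝ, phi z * phi (lam * z))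
    = (2*Real.pi)⁻¹ * (Real.sqrt (2*Real.pi) / Real.sqrt (1+lam^2)) := by
  have e : (fun z : ℝ => phi z * phi (lam * z))
      = fun z : ℝ => (2*Real.pi)⁻¹ * Real.exp (-(1+lam^2) * z ^ 2 / 2) := by
    funext z; rw [phi_mul_phi]
  rw [e, integral_const_mul, G0 (spos lam)]

lemma J1 : (∫ z : ℝ, z * (phi z * phi (lam * z))) = 0 := by
  have e : (fun z : ℝ => z * (phi z * phi (lam * z)))
      = fun z : ℝ => (2*Real.pi)⁻¹ * (z * Real.exp (-(1+lam^2) * z ^ 2 / 2)) := by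
    funext z; rw [phi_mul_phi]; ring
  rw [e, integral_const_mul, G1 (spos lam), mul_zero]

lemma J2 : (∫ z : ℝ, z^2 * (phi z * phi (lam * z)))
    = (2*Real.pi)⁻¹ * (Real.sqrt (2*Real.pi) / ((1+lam^2) * Real.sqrt (1+lam^2))) := by
  have e : (fun z : ℝ => z^2 * (phi z * phi (lam * z)))
      = fun z : ℝ => (2*Real.pi)⁻¹ * (z^2 * Real.exp (-(1+lam^2) * z ^ 2 / 2)) := by
    funext z; rw [phi_mul_phi]; ring
  rw [e, integral_const_mul, G2 (spos lam)]

lemma J3 : (∫ z : ℝ, z^3 * (phi z * phi (lam * z))) = 0 := by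
  have e : (fun z : ℝ => z^3 * (phi z * phi (lam * z)))
      = fun z : ℝ => (2*Real.pi)⁻¹ * (z^3 * Real.exp (-(1+lam^2) * z ^ 2 / 2)) := by
    funext z; rw [phi_mul_phi]; ring
  rw [e, integral_const_mul, G3 (spos lam), mul_zero]

lemma V0 : (∫ z : ℝ, phi z * Phi (lam * z)) = 1/2 := by
  have h := integral_neg_eq_self (fun z : ℝ => phi z * Phi (lam * z)) volume
  have e : (fun z : ℝ => phi (-z) * Phi (lam * -z))
      = fun z : ℝ => phi z - phi z * Phi (lam * z) := by
    funext z
    rw [show lam * -z = -(lam * z) by ring, Phi_neg, phi_neg]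
    ring
  rw [e, integral_sub integrable_phi (int0 lam), integral_phi] at h
  linarith

lemma V1 : (∫ z : ℝ, z * phi z * Phi (lam * z))
    = lam * ((2*Real.pi)⁻¹ * (Real.sqrt (2*Real.pi) / Real.sqrt (1+lam^2))) := by
  have h := masterB lam 0 0 0 1
  have e : (fun z : ℝ => ((-0)*z^4 + (-0)*z^3 + (3*0 - 0)*z^2 + (2*0 - 1)*z + 0) * phi z * Phi (lam * z)
      + lam * ((0*z^3 + 0*z^2 + 0*z + 1) * (phi z * phi (lam * z))))
      = fun z : ℝ => (-1) * (z * phi z * Phi (lam * z)) + lam * (phi z * phi (lam * z)) := by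
    funext z; ring
  rw [e, integral_add ((int1 lam).const_mul (-1)) (by
      have h2 := (integrable_poly4_phiphi lam 0 0 0 0 1).const_mul lam
      have e2 : (fun z : ℝ => lam * (phi z * phi (lam * z)))
          = fun z : ℝ => lam * ((0*z^4 + 0*z^3 + 0*z^2 + 0*z + 1) * (phi z * phi (lam * z))) := by
        funext z; ring
      rw [e2]; exact h2),
    integral_const_mul, integral_const_mul, J0] at h
  linarith

lemma intJ' : Integrable (fun z : ℝ => lam * (z * (phi z * phi (lam * z)))) := by
  have h := (intJ lam 1).const_mul lam
  have e : (fun z : ℝ => lam * (z * (phi z * phi (lam * z))))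
      = fun z : ℝ => lam * (z^1 * (phi z * phi (lam * z))) := by
    funext z; ring
  rw [e]; exact h

lemma J1' : (∫ z : ℝ, lam * (z * (phi z * phi (lam * z)))) = 0 := by
  rw [show (fun z : ℝ => lam * (z * (phi z * phi (lam * z))))
    = fun z : ℝ => lam * (z * (phi z * phi (lam * z))) from rfl, integral_const_mul, J1, mul_zero]

lemma V2 : (∫ z : ℝ, z^2 * phi z * Phi (lam * z)) = 1/2 := by
  have h := masterB lam 0 0 1 0
  have e : (fun z : ℝ => ((-0)*z^4 + (-0)*z^3 + (3*0 - 1)*z^2 + (2*0 - 0)*z + 1) * phi z * Phi (lam * z)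
      + lam * ((0*z^3 + 0*z^2 + 1*z + 0) * (phi z * phi (lam * z))))
      = fun z : ℝ => ((-1) * (z^2 * phi z * Phi (lam * z)) + phi z * Phi (lam * z))
        + lam * (z * (phi z * phi (lam * z))) := by
    funext z; ring
  have hA : Integrable (fun z : ℝ => (-1) * (z^2 * phi z * Phi (lam * z)) + phi z * Phi (lam * z)) :=
    ((int2 lam).const_mul (-1)).add (int0 lam)
  rw [e, integral_add hA (intJ' lam),
    integral_add ((int2 lam).const_mul (-1)) (int0 lam), integral_const_mul, V0, J1'] at h
  linarith

lemma V3 : (∫ z : ℝ, z^3 * phi z * Phi (lam * z))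
    = 2 * (lam * ((2*Real.pi)⁻¹ * (Real.sqrt (2*Real.pi) / Real.sqrt (1+lam^2))))
      + lam * ((2*Real.pi)⁻¹ * (Real.sqrt (2*Real.pi) / ((1+lam^2) * Real.sqrt (1+lam^2)))) := by
  have h := masterB lam 0 1 0 0
  have hint2 : Integrable (fun z : ℝ => lam * (z^2 * (phi z * phi (lam * z)))) :=
    (intJ lam 2).const_mul lam
  have e : (fun z : ℝ => ((-0)*z^4 + (-1)*z^3 + (3*0 - 0)*z^2 + (2*1 - 0)*z + 0) * phi z * Phi (lam * z)
      + lam * ((0*z^3 + 1*z^2 + 0*z + 0) * (phi z * phi (lam * z))))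
      = fun z : ℝ => ((-1) * (z^3 * phi z * Phi (lam * z)) + 2 * (z * phi z * Phi (lam * z)))
        + lam * (z^2 * (phi z * phi (lam * z))) := by
    funext z; ring
  have hA : Integrable (fun z : ℝ => (-1) * (z^3 * phi z * Phi (lam * z)) + 2 * (z * phi z * Phi (lam * z))) :=
    ((int3 lam).const_mul (-1)).add ((int1 lam).const_mul 2)
  rw [e, integral_add hA hint2,
    integral_add ((int3 lam).const_mul (-1)) ((int1 lam).const_mul 2),
    integral_const_mul, integral_const_mul, integral_const_mul, V1, J2] at h
  linarith

lemma V4 : (∫ z : ℝ, z^4 * phi z * Phi (lam * z)) = 3/2 := by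
  have h := masterB lam 1 0 0 0
  have hint3 : Integrable (fun z : ℝ => lam * (z^3 * (phi z * phi (lam * z)))) :=
    (intJ lam 3).const_mul lam
  have e : (fun z : ℝ => ((-1)*z^4 + (-0)*z^3 + (3*1 - 0)*z^2 + (2*0 - 0)*z + 0) * phi z * Phi (lam * z)
      + lam * ((1*z^3 + 0*z^2 + 0*z + 0) * (phi z * phi (lam * z))))
      = fun z : ℝ => ((-1) * (z^4 * phi z * Phi (lam * z)) + 3 * (z^2 * phi z * Phi (lam * z)))
        + lam * (z^3 * (phi z * phi (lam * z))) := by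
    funext z; ring
  have hA : Integrable (fun z : ℝ => (-1) * (z^4 * phi z * Phi (lam * z)) + 3 * (z^2 * phi z * Phi (lam * z))) :=
    ((int4 lam).const_mul (-1)).add ((int2 lam).const_mul 3)
  rw [e, integral_add hA hint3,
    integral_add ((int4 lam).const_mul (-1)) ((int2 lam).const_mul 3),
    integral_const_mul, integral_const_mul, integral_const_mul, V2, J3, mul_zero] at h
  linarith

end Moments

lemma final_algebra (α lam q r : ℝ) (hq : 0 < q) (hr : 0 < r) (hr2 : r^2 = 1 + lam^2) :
    4*(1/2 : ℝ) + (-8*α)*(lam*((q^2)⁻¹ * (q/r))) + 8*α^2*(1/2)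
      + (-4*α^3)*(2*(lam*((q^2)⁻¹ * (q/r))) + lam*((q^2)⁻¹ * (q/((1+lam^2)*r)))) + α^4*(3/2)
    = (2 + 4*α^2 + 1.5*α^4) - (2/q)*(2*α^3*(1-(lam/r)^2)*(lam/r) + 4*α*(lam/r) + 4*α^3*(lam/r)) := by
  have hq0 : q ≠ 0 := hq.ne'
  have hr0 : r ≠ 0 := hr.ne'
  have hs0 : (1:ℝ) + lam^2 ≠ 0 := by positivity
  rw [show (1:ℝ) + lam^2 = r^2 from hr2.symm]
  field_simp
  ring_nf
  linear_combination (8*α^3*lam) * hr2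

theorem gbasn2_normalizing_constant (α lam : ℝ) :
    let δ : ℝ := lam / Real.sqrt (1 + lam ^ 2)
    let b : ℝ := Real.sqrt (2 / Real.pi)
    let C : ℝ := (2 + 4 * α ^ 2 + 1.5 * α ^ 4) -
      b * (2 * α ^ 3 * (1 - δ ^ 2) * δ + 4 * α * δ + 4 * α ^ 3 * δ)
    (∫ z : ℝ, ((1 - α * z) ^ 2 + 1) ^ 2 * phi z * Phi (lam * z)) = C ∧
    (∀ z : ℝ, 0 ≤ ((1 - α * z) ^ 2 + 1) ^ 2 * phi z * Phi (lam * z) / C) ∧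
    (∫ z : ℝ, ((1 - α * z) ^ 2 + 1) ^ 2 * phi z * Phi (lam * z) / C) = 1 := by
  intro δ b C
  have hδ : δ = lam / Real.sqrt (1 + lam ^ 2) := rfl
  have hb : b = Real.sqrt (2 / Real.pi) := rfl
  have hC : C = (2 + 4 * α ^ 2 + 1.5 * α ^ 4) -
      b * (2 * α ^ 3 * (1 - δ ^ 2) * δ + 4 * α * δ + 4 * α ^ 3 * δ) := rfl
  set q : ℝ := Real.sqrt (2 * Real.pi) with hqdef
  set r : ℝ := Real.sqrt (1 + lam ^ 2) with hrdef
  have hq : 0 < q := Real.sqrt_pos.2 (by positivity)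
  have hr : 0 < r := Real.sqrt_pos.2 (by positivity)
  have hq2 : q^2 = 2 * Real.pi := Real.sq_sqrt (by positivity)
  have hr2 : r^2 = 1 + lam^2 := Real.sq_sqrt (by positivity)
  have hbq : b = 2 / q := by
    have h4 : b * q = 2 := by
      rw [hb, hqdef, ← Real.sqrt_mul (by positivity : (0:ℝ) ≤ 2 / Real.pi),
        show 2 / Real.pi * (2 * Real.pi) = 4 by field_simp; ring,
        show (4:ℝ) = 2^2 by norm_num, Real.sqrt_sq (by norm_num)]
    field_simp at h4 ⊢
    linarith
  -- value of the integral
  have hI : (∫ z : ℝ, ((1 - α * z) ^ 2 + 1) ^ 2 * phi z * Phi (lam * z)) = C := by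
    have e : (fun z : ℝ => ((1 - α * z) ^ 2 + 1) ^ 2 * phi z * Phi (lam * z))
        = fun z : ℝ => 4*(phi z * Phi (lam * z)) + (-8*α)*(z * phi z * Phi (lam * z))
          + (8*α^2)*(z^2 * phi z * Phi (lam * z)) + (-4*α^3)*(z^3 * phi z * Phi (lam * z))
          + (α^4)*(z^4 * phi z * Phi (lam * z)) := by
      funext z; ring
    have t0 := (int0 lam).const_mul 4
    have t1 := (int1 lam).const_mul (-8*α)
    have t2 := (int2 lam).const_mul (8*α^2)
    have t3 := (int3 lam).const_mul (-4*α^3)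
    have t4 := (int4 lam).const_mul (α^4)
    have hA1 : Integrable (fun z : ℝ => 4*(phi z * Phi (lam * z))
        + (-8*α)*(z * phi z * Phi (lam * z))) := t0.add t1
    have hA2 : Integrable (fun z : ℝ => 4*(phi z * Phi (lam * z))
        + (-8*α)*(z * phi z * Phi (lam * z)) + (8*α^2)*(z^2 * phi z * Phi (lam * z))) := hA1.add t2
    have hA3 : Integrable (fun z : ℝ => 4*(phi z * Phi (lam * z))
        + (-8*α)*(z * phi z * Phi (lam * z)) + (8*α^2)*(z^2 * phi z * Phi (lam * z))
        + (-4*α^3)*(z^3 * phi z * Phi (lam * z))) := hA2.add t3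
    rw [e, integral_add hA3 t4, integral_add hA2 t3, integral_add hA1 t2, integral_add t0 t1,
      integral_const_mul, integral_const_mul, integral_const_mul, integral_const_mul, integral_const_mul,
      V0, V1, V2, V3, V4]
    rw [hC, hδ, hbq, ← hrdef, show (2*Real.pi)⁻¹ = (q^2)⁻¹ by rw [hq2]]
    exact final_algebra α lam q r hq hr hr2
  have intf : Integrable (fun z : ℝ => ((1 - α * z) ^ 2 + 1) ^ 2 * phi z * Phi (lam * z)) := by
    have h := integrable_poly4_phi_Phi lam (α^4) (-(4*α^3)) (8*α^2) (-(8*α)) 4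
    have e : (fun z : ℝ => ((1 - α * z) ^ 2 + 1) ^ 2 * phi z * Phi (lam * z))
        = fun z : ℝ => ((α^4)*z^4 + (-(4*α^3))*z^3 + (8*α^2)*z^2 + (-(8*α))*z + 4)
          * phi z * Phi (lam * z) := by
      funext z; ring
    rw [e]; exact h
  have hCpos : 0 < C := by
    have hge : (1:ℝ)/2 ≤ ∫ z : ℝ, ((1 - α * z) ^ 2 + 1) ^ 2 * phi z * Phi (lam * z) := by
      rw [← V0 lam]
      apply integral_mono (int0 lam) intf
      intro z
      show phi z * Phi (lam * z) ≤ ((1 - α * z) ^ 2 + 1) ^ 2 * phi z * Phi (lam * z)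
      have h3 : (1:ℝ) ≤ ((1 - α * z) ^ 2 + 1) ^ 2 := by nlinarith [sq_nonneg (1 - α * z)]
      nlinarith [h3, mul_nonneg (phi_nonneg z) (Phi_nonneg (lam * z))]
    rw [hI] at hge
    exact lt_of_lt_of_le one_half_pos hge
  refine ⟨hI, fun z => div_nonneg ?_ hCpos.le, ?_⟩
  · exact mul_nonneg (mul_nonneg (by positivity) (phi_nonneg z)) (Phi_nonneg _)
  · rw [integral_div, hI, div_self hCpos.ne']
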